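/- arXiv:1902.01487 — 3 statements merged into one kernel-verified Lean document; each statement's English description precedes it below -/
import Mathlib

section
/- If the classifier f satisfies X ∩ f(X) ≠ ∅ for all granules X, then for every j: |Low(Y_j)| ≤ n_{jj} − Ind(Σ_{i≠j} n_{ji}) ≤ n_{jj} ≤ |Y_j|, where Ind(b) = 0 if b = 0 and Ind(b) = 1 otherwise. -/
/-!
Via `n_ij = |Ŷ_i ∩ Y_j|`, where `Ŷ_i` is the union of the granules sent to `Y_i`, the inequalities
become inclusions. A granule inside `Y_j` meets no other class, so it is sent to `Y_j`; hence
`Low(Y_j) ⊆ Ŷ_j ∩ Y_j ⊆ Y_j`. If some granule sent to `Y_j` also meets another class, it is not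
inside `Y_j`, yet it meets `Y_j` because `X ∩ f(X) ≠ ∅`; those points lie in `Ŷ_j ∩ Y_j` but not
in `Low(Y_j)`, so the first inclusion is strict.
-/

open Finset

def conf {U : Type} [DecidableEq U] {m k : ℕ} (X : Fin m → Finset U)
    (Y : Fin k → Finset U) (f : Fin m → Fin k) (i j : Fin k) : ℕ :=
  ∑ s ∈ Finset.univ.filter (fun s => f s = i), (X s ∩ Y j).card

def low {U : Type} [DecidableEq U] {m : ℕ} (X : Fin m → Finset U)
    (Z : Finset U) : Finset U :=
  (Finset.univ.filter (fun s => X s ⊆ Z)).biUnion X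

def upp {U : Type} [DecidableEq U] {m : ℕ} (X : Fin m → Finset U)
    (Z : Finset U) : Finset U :=
  (Finset.univ.filter (fun s => (X s ∩ Z).Nonempty)).biUnion X

def hatY {U : Type} [DecidableEq U] {m k : ℕ} (X : Fin m → Finset U)
    (f : Fin m → Fin k) (i : Fin k) : Finset U :=
  (Finset.univ.filter (fun s => f s = i)).biUnion X

def ind (b : ℕ) : ℕ := if b = 0 then 0 else 1

open Function

lemma add_ind_le {a b c : ℕ} (hle : a ≤ c) (hlt : b ≠ 0 → a < c) : a + ind b ≤ c := by
  unfold ind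
  split_ifs with hb
  · simpa using hle
  · exact hlt hb

lemma card_biUnion_inter {ι U : Type} [DecidableEq U] {X : ι → Finset U}
    (hX : Pairwise (Disjoint on X)) (S : Finset ι) (Z : Finset U) :
    (S.biUnion X ∩ Z).card = ∑ s ∈ S, (X s ∩ Z).card := by
  rw [biUnion_inter, card_biUnion]
  exact fun s _ t _ hst => (hX hst).mono inter_subset_left inter_subset_left

section Classifier

variable {U : Type} [DecidableEq U] {m k : ℕ} {X : Fin m → Finset U} {Y : Fin k → Finset U}
  {f : Fin m → Fin k}

lemma conf_eq_card_hatY_inter (hX : Pairwise (Disjoint on X)) (i j : Fin k) :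
    conf X Y f i j = (hatY X f i ∩ Y j).card :=
  (card_biUnion_inter hX _ _).symm

lemma notMem_low_of_not_subset (hX : Pairwise (Disjoint on X)) {Z : Finset U} {s : Fin m}
    {u : U} (hu : u ∈ X s) (hs : ¬ X s ⊆ Z) : u ∉ low X Z := by
  simp only [low, mem_biUnion, mem_filter, mem_univ, true_and, not_exists, not_and]
  intro t ht hut
  obtain rfl : t = s := by_contra fun hts => disjoint_left.mp (hX hts) hut hu
  exact hs ht

lemma apply_eq_of_subset (hY : Pairwise (Disjoint on Y))
    (hf : ∀ s, (X s ∩ Y (f s)).Nonempty) {s : Fin m} {j : Fin k} (hs : X s ⊆ Y j) : f s = j := by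
  obtain ⟨u, hu⟩ := hf s
  obtain ⟨hus, huf⟩ := mem_inter.mp hu
  by_contra hne
  exact disjoint_left.mp (hY hne) huf (hs hus)

lemma low_subset_hatY_inter (hY : Pairwise (Disjoint on Y))
    (hf : ∀ s, (X s ∩ Y (f s)).Nonempty) (j : Fin k) : low X (Y j) ⊆ hatY X f j ∩ Y j := by
  intro u hu
  simp only [low, mem_biUnion, mem_filter, mem_univ, true_and] at hu
  obtain ⟨s, hs, hus⟩ := hu
  exact mem_inter.mpr
    ⟨mem_biUnion.mpr ⟨s, by simpa using apply_eq_of_subset hY hf hs, hus⟩, hs hus⟩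

lemma low_ssubset_hatY_inter (hX : Pairwise (Disjoint on X)) (hY : Pairwise (Disjoint on Y))
    (hf : ∀ s, (X s ∩ Y (f s)).Nonempty) {i j : Fin k} (hij : i ≠ j)
    (hji : (hatY X f j ∩ Y i).Nonempty) : low X (Y j) ⊂ hatY X f j ∩ Y j := by
  obtain ⟨u, hu⟩ := hji
  simp only [hatY, mem_inter, mem_biUnion, mem_filter, mem_univ, true_and] at hu
  obtain ⟨⟨s, rfl, hus⟩, hui⟩ := hu
  have hs : ¬ X s ⊆ Y (f s) := fun h => disjoint_left.mp (hY hij) hui (h hus)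
  obtain ⟨v, hv⟩ := hf s
  obtain ⟨hvs, hvf⟩ := mem_inter.mp hv
  refine (ssubset_iff_of_subset (low_subset_hatY_inter hY hf (f s))).mpr ⟨v, ?_, ?_⟩
  · exact mem_inter.mpr ⟨mem_biUnion.mpr ⟨s, by simp, hvs⟩, hvf⟩
  · exact notMem_low_of_not_subset hX hvs hs

lemma card_low_lt_conf (hX : Pairwise (Disjoint on X)) (hY : Pairwise (Disjoint on Y))
    (hf : ∀ s, (X s ∩ Y (f s)).Nonempty) {j : Fin k}
    (hoff : ∑ i ∈ univ.filter (fun i => i ≠ j), conf X Y f j i ≠ 0) :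
    (low X (Y j)).card < conf X Y f j j := by
  obtain ⟨i, hi, hji⟩ := exists_ne_zero_of_sum_ne_zero hoff
  rw [conf_eq_card_hatY_inter hX] at hji ⊢
  exact card_lt_card
    (low_ssubset_hatY_inter hX hY hf (mem_filter.mp hi).2 (card_ne_zero.mp hji))

end Classifier

theorem stmt6_general (U : Type) [DecidableEq U]
    (m k : ℕ) (X : Fin m → Finset U) (Y : Fin k → Finset U)
    (f : Fin m → Fin k)
    (hXdis : ∀ s t : Fin m, s ≠ t → Disjoint (X s) (X t))
    (hYdis : ∀ i j : Fin k, i ≠ j → Disjoint (Y i) (Y j))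
    (hf : ∀ s, (X s ∩ Y (f s)).Nonempty)
    :
    ∀ j,
      (low X (Y j)).card ≤
        conf X Y f j j - ind (∑ i ∈ Finset.univ.filter (fun i => i ≠ j), conf X Y f j i) ∧
      conf X Y f j j - ind (∑ i ∈ Finset.univ.filter (fun i => i ≠ j), conf X Y f j i) ≤
        conf X Y f j j ∧
      conf X Y f j j ≤ (Y j).card := by
  intro j
  have hle : (low X (Y j)).card ≤ conf X Y f j j := by
    rw [conf_eq_card_hatY_inter hXdis]
    exact card_le_card (low_subset_hatY_inter hYdis hf j)
  refine ⟨Nat.le_sub_of_add_le (add_ind_le hle (card_low_lt_conf hXdis hYdis hf)),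
    Nat.sub_le _ _, ?_⟩
  rw [conf_eq_card_hatY_inter hXdis]
  exact card_le_card inter_subset_right

theorem stmt6 (U : Type) [Fintype U] [DecidableEq U] [Nonempty U]
    (m k : ℕ) (X : Fin m → Finset U) (Y : Fin k → Finset U)
    (f : Fin m → Fin k)
    (hXdis : ∀ s t : Fin m, s ≠ t → Disjoint (X s) (X t))
    (hXcov : ∀ u : U, ∃ s, u ∈ X s)
    (hXne : ∀ s, (X s).Nonempty)
    (hYdis : ∀ i j : Fin k, i ≠ j → Disjoint (Y i) (Y j))
    (hYcov : ∀ u : U, ∃ i, u ∈ Y i)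
    (hk : 1 < k)
    (hf : ∀ s, (X s ∩ Y (f s)).Nonempty)
    :
    ∀ j,
      (low X (Y j)).card ≤
        conf X Y f j j - ind (∑ i ∈ Finset.univ.filter (fun i => i ≠ j), conf X Y f j i) ∧
      conf X Y f j j - ind (∑ i ∈ Finset.univ.filter (fun i => i ≠ j), conf X Y f j i) ≤
        conf X Y f j j ∧
      conf X Y f j j ≤ (Y j).card :=
  stmt6_general U m k X Y f hXdis hYdis hf
end

section
/- If the classifier f satisfies X ∩ f(X) ≠ ∅ for all granules X, then for every j: |Y_j| ≤ nu_j^* ≤ nu_j^{**} ≤ |Upp(Y_j)|, where nu_j^* := n_{jj} + Σ_{i≠j}(n_{ij} + n_{ji}) and nu_j^{**} := nu_j^* + Σ_{i≠j} Ind(n_{ij}). -/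
/-! Upp(Y_j) is the disjoint union of the granules meeting Y_j, which we group by their class.
Since X ∩ f(X) ≠ ∅, every granule of class Y_j meets Y_j, and these granules have total size
Σ_i n_{ji}. For i ≠ j, the granules of class Y_i meeting Y_j contain the n_{ij} points of Y_j
counted in n_{ij} and, each of them, a point of Y_i outside Y_j, so their total size is at least
n_{ij} + Ind(n_{ij}). The lower bound is the column sum Σ_i n_{ij} = |Y_j|. -/

open Finset

open Function

theorem card_eq_sum_card_inter {ι α : Type*} [Fintype ι] [DecidableEq α] {P : ι → Finset α}
    (hP : Pairwise (Disjoint on P)) {Z : Finset α} (hZ : ∀ a ∈ Z, ∃ i, a ∈ P i) :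
    #Z = ∑ i, #(Z ∩ P i) := by
  have hZ_eq : Z = univ.biUnion fun i => Z ∩ P i := by
    ext a
    simp only [mem_biUnion, mem_univ, true_and, mem_inter]
    exact ⟨fun ha => (hZ a ha).imp fun _ hi => ⟨ha, hi⟩, fun ⟨_, ha, _⟩ => ha⟩
  conv_lhs => rw [hZ_eq]
  exact card_biUnion fun i _ i' _ hii' => (hP hii').mono inter_subset_right inter_subset_right

theorem ind_sum_le_card {ι : Type*} (T : Finset ι) (g : ι → ℕ) :
    ind (∑ s ∈ T, g s) ≤ #T := by
  unfold ind
  split_ifs with h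
  · exact Nat.zero_le _
  · exact one_le_card.mpr (nonempty_of_sum_ne_zero h)

section Confusion

variable {U : Type} [DecidableEq U] {m k : ℕ} {X : Fin m → Finset U} {Y : Fin k → Finset U}
  (f : Fin m → Fin k)

theorem sum_conf_col_eq_card (hXdis : ∀ s t, s ≠ t → Disjoint (X s) (X t))
    (hXcov : ∀ u, ∃ s, u ∈ X s) (j : Fin k) :
    ∑ i, conf X Y f i j = #(Y j) := by
  simp only [conf]
  rw [sum_fiberwise_of_maps_to (fun s _ => mem_univ (f s)),
    card_eq_sum_card_inter (fun s t => hXdis s t) fun u _ => hXcov u]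
  simp only [inter_comm]

theorem sum_conf_row_eq (hYdis : ∀ i j, i ≠ j → Disjoint (Y i) (Y j))
    (hYcov : ∀ u, ∃ i, u ∈ Y i) (hf : ∀ s, (X s ∩ Y (f s)).Nonempty) (j : Fin k) :
    ∑ i, conf X Y f j i = ∑ s ∈ {s | (X s ∩ Y j).Nonempty} with f s = j, #(X s) := by
  rw [filter_comm, filter_true_of_mem fun s hs => (mem_filter.mp hs).2 ▸ hf s]
  simp only [conf]
  rw [sum_comm]
  exact sum_congr rfl fun s _ =>
    (card_eq_sum_card_inter (fun i i' => hYdis i i') fun u _ => hYcov u).symm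

theorem conf_add_ind_conf_le (hf : ∀ s, (X s ∩ Y (f s)).Nonempty) {i j : Fin k}
    (hij : Disjoint (Y i) (Y j)) :
    conf X Y f i j + ind (conf X Y f i j) ≤
      ∑ s ∈ {s | (X s ∩ Y j).Nonempty} with f s = i, #(X s) := by
  set T : Finset (Fin m) := {s ∈ {s | (X s ∩ Y j).Nonempty} | f s = i}
  have hconf : conf X Y f i j = ∑ s ∈ T, #(X s ∩ Y j) := by
    rw [conf, show T = _ from filter_comm _ _ _]
    exact (sum_filter_of_ne fun s _ hs => card_ne_zero.mp hs).symm
  have hlt : ∀ s ∈ T, #(X s ∩ Y j) + 1 ≤ #(X s) := by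
    intro s hs
    obtain ⟨u, hu⟩ := hf s
    rw [mem_inter, (mem_filter.mp hs).2] at hu
    refine card_lt_card ((ssubset_iff_of_subset inter_subset_left).mpr ⟨u, hu.1, ?_⟩)
    exact fun hu' => disjoint_left.mp hij hu.2 (mem_inter.mp hu').2
  calc conf X Y f i j + ind (conf X Y f i j)
      ≤ ∑ s ∈ T, #(X s ∩ Y j) + #T := by rw [hconf]; gcongr; exact ind_sum_le_card T _
    _ = ∑ s ∈ T, (#(X s ∩ Y j) + 1) := by rw [sum_add_distrib, card_eq_sum_ones]
    _ ≤ ∑ s ∈ T, #(X s) := sum_le_sum hlt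

theorem card_upp (hXdis : ∀ s t, s ≠ t → Disjoint (X s) (X t)) (Z : Finset U) :
    #(upp X Z) = ∑ s ∈ {s | (X s ∩ Z).Nonempty}, #(X s) :=
  card_biUnion fun s _ t _ hst => hXdis s t hst

end Confusion

theorem stmt7_general (U : Type) [DecidableEq U]
    (m k : ℕ) (X : Fin m → Finset U) (Y : Fin k → Finset U)
    (f : Fin m → Fin k)
    (hXdis : ∀ s t : Fin m, s ≠ t → Disjoint (X s) (X t))
    (hXcov : ∀ u : U, ∃ s, u ∈ X s)
    (hYdis : ∀ i j : Fin k, i ≠ j → Disjoint (Y i) (Y j))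
    (hYcov : ∀ u : U, ∃ i, u ∈ Y i)
    (hf : ∀ s, (X s ∩ Y (f s)).Nonempty)
    :
    ∀ j,
      (Y j).card ≤
        conf X Y f j j + ∑ i ∈ Finset.univ.filter (fun i => i ≠ j),
          (conf X Y f i j + conf X Y f j i) ∧
      conf X Y f j j + ∑ i ∈ Finset.univ.filter (fun i => i ≠ j),
          (conf X Y f i j + conf X Y f j i) ≤
        (conf X Y f j j + ∑ i ∈ Finset.univ.filter (fun i => i ≠ j),
          (conf X Y f i j + conf X Y f j i)) +
          ∑ i ∈ Finset.univ.filter (fun i => i ≠ j), ind (conf X Y f i j) ∧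
      (conf X Y f j j + ∑ i ∈ Finset.univ.filter (fun i => i ≠ j),
          (conf X Y f i j + conf X Y f j i)) +
          ∑ i ∈ Finset.univ.filter (fun i => i ≠ j), ind (conf X Y f i j) ≤
        (upp X (Y j)).card := by
  intro j
  simp only [filter_ne']
  have hcol : #(Y j) = conf X Y f j j + ∑ i ∈ univ.erase j, conf X Y f i j := by
    rw [add_sum_erase _ (fun i => conf X Y f i j) (mem_univ j),
      sum_conf_col_eq_card f hXdis hXcov]
  have hupp : conf X Y f j j + ∑ i ∈ univ.erase j, conf X Y f j i +
      ∑ i ∈ univ.erase j, (conf X Y f i j + ind (conf X Y f i j)) ≤ #(upp X (Y j)) := by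
    rw [card_upp hXdis, ← sum_fiberwise _ f, ← add_sum_erase _ _ (mem_univ j),
      add_sum_erase _ (fun i => conf X Y f j i) (mem_univ j), sum_conf_row_eq f hYdis hYcov hf]
    exact add_le_add le_rfl (sum_le_sum fun i hi =>
      conf_add_ind_conf_le f hf (hYdis i j (ne_of_mem_erase hi)))
  rw [sum_add_distrib] at hupp ⊢
  exact ⟨by omega, by omega, by omega⟩

theorem stmt7 (U : Type) [Fintype U] [DecidableEq U] [Nonempty U]
    (m k : ℕ) (X : Fin m → Finset U) (Y : Fin k → Finset U)
    (f : Fin m → Fin k)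
    (hXdis : ∀ s t : Fin m, s ≠ t → Disjoint (X s) (X t))
    (hXcov : ∀ u : U, ∃ s, u ∈ X s)
    (hXne : ∀ s, (X s).Nonempty)
    (hYdis : ∀ i j : Fin k, i ≠ j → Disjoint (Y i) (Y j))
    (hYcov : ∀ u : U, ∃ i, u ∈ Y i)
    (hk : 1 < k)
    (hf : ∀ s, (X s ∩ Y (f s)).Nonempty)
    :
    ∀ j,
      (Y j).card ≤
        conf X Y f j j + ∑ i ∈ Finset.univ.filter (fun i => i ≠ j),
          (conf X Y f i j + conf X Y f j i) ∧
      conf X Y f j j + ∑ i ∈ Finset.univ.filter (fun i => i ≠ j),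
          (conf X Y f i j + conf X Y f j i) ≤
        (conf X Y f j j + ∑ i ∈ Finset.univ.filter (fun i => i ≠ j),
          (conf X Y f i j + conf X Y f j i)) +
          ∑ i ∈ Finset.univ.filter (fun i => i ≠ j), ind (conf X Y f i j) ∧
      (conf X Y f j j + ∑ i ∈ Finset.univ.filter (fun i => i ≠ j),
          (conf X Y f i j + conf X Y f j i)) +
          ∑ i ∈ Finset.univ.filter (fun i => i ≠ j), ind (conf X Y f i j) ≤
        (upp X (Y j)).card :=
  stmt7_general U m k X Y f hXdis hXcov hYdis hYcov hf
end

section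
/- If f is a maximal row classifier, then for every j: |Low(Y_j)| ≤ nl_j^m ≤ nl_j^{**}, where nl_j^m := n_{jj} − max{n_{jt} : 1 ≤ t ≤ k, t ≠ j} and nl_j^{**} := n_{jj} − Ind(Σ_{i≠j} n_{ji}). -/
/-!
A granule `X s ⊆ Y j` that the classifier does not send to `j` must be empty: the maximal row
property gives `|X s| = |X s ∩ Y j| ≤ |X s ∩ Y (f s)| = 0`. So every nonempty granule of
`Low(Y_j)` is sent to `j`, where it contributes `|X s|` to `n_jj` and nothing to `n_jt` for
`t ≠ j`; every other granule sent to `j` contributes to `n_jj` at least as much as to `n_jt`.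
Summing over granules gives `|Low(Y_j)| + n_jt ≤ n_jj`. For the second inequality, a nonzero sum
of naturals has a nonzero summand, so the maximum of the summands is at least `1`.
-/

open Finset

open Function

def IsMaxRowClassifier {U : Type} [DecidableEq U] {m k : ℕ} (X : Fin m → Finset U)
    (Y : Fin k → Finset U) (f : Fin m → Fin k) : Prop :=
  ∀ s j, (X s ∩ Y j).card ≤ (X s ∩ Y (f s)).card

lemma ind_sum_le_sup {ι : Type*} (s : Finset ι) (g : ι → ℕ) : ind (∑ i ∈ s, g i) ≤ s.sup g := by
  unfold ind
  split_ifs with hsum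
  · exact Nat.zero_le _
  · obtain ⟨i, hi, hgi⟩ := exists_ne_zero_of_sum_ne_zero hsum
    exact (Nat.one_le_iff_ne_zero.mpr hgi).trans (le_sup hi)

section MaximalRowClassifier

variable {U : Type} [DecidableEq U] {m k : ℕ} {X : Fin m → Finset U} {Y : Fin k → Finset U}
  {f : Fin m → Fin k}

lemma card_eq_zero_of_subset_of_ne (hY : Pairwise (Disjoint on Y))
    (hmrc : IsMaxRowClassifier X Y f) {s : Fin m} {j : Fin k}
    (hsub : X s ⊆ Y j) (hne : f s ≠ j) : (X s).card = 0 := by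
  have hempty : X s ∩ Y (f s) = ∅ :=
    disjoint_iff_inter_eq_empty.mp ((hY hne).symm.mono_left hsub)
  simpa [inter_eq_left.mpr hsub, hempty] using hmrc s j

lemma card_low_le_sum_classified (hY : Pairwise (Disjoint on Y))
    (hmrc : IsMaxRowClassifier X Y f) (j : Fin k) :
    (low X (Y j)).card ≤
      ∑ s ∈ univ.filter (fun s => f s = j), if X s ⊆ Y j then (X s).card else 0 := by
  calc (low X (Y j)).card
      ≤ ∑ s ∈ univ.filter (fun s => X s ⊆ Y j), (X s).card := card_biUnion_le
    _ = ∑ s, if f s = j then (if X s ⊆ Y j then (X s).card else 0) else 0 := by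
        rw [sum_filter]
        refine sum_congr rfl fun s _ => ?_
        by_cases hfs : f s = j
        · rw [if_pos hfs]
        · rw [if_neg hfs]
          split_ifs with hsub
          · exact card_eq_zero_of_subset_of_ne hY hmrc hsub hfs
          · rfl
    _ = _ := (sum_filter _ _).symm

lemma card_low_le_conf_self (hY : Pairwise (Disjoint on Y))
    (hmrc : IsMaxRowClassifier X Y f) (j : Fin k) :
    (low X (Y j)).card ≤ conf X Y f j j := by
  refine (card_low_le_sum_classified hY hmrc j).trans (sum_le_sum fun s _ => ?_)
  split_ifs with hsub
  · rw [inter_eq_left.mpr hsub]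
  · exact Nat.zero_le _

lemma card_low_add_conf_le (hY : Pairwise (Disjoint on Y))
    (hmrc : IsMaxRowClassifier X Y f) {j t : Fin k} (htj : t ≠ j) :
    (low X (Y j)).card + conf X Y f j t ≤ conf X Y f j j := by
  refine (Nat.add_le_add_right (card_low_le_sum_classified hY hmrc j) _).trans ?_
  rw [conf, conf, ← sum_add_distrib]
  refine sum_le_sum fun s hs => ?_
  split_ifs with hsub
  · have hdisj : Disjoint (X s) (Y t) := (hY htj).symm.mono_left hsub
    rw [inter_eq_left.mpr hsub, disjoint_iff_inter_eq_empty.mp hdisj, card_empty, add_zero]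
  · simpa [(mem_filter.mp hs).2] using hmrc s t

lemma card_low_add_sup_conf_le (hY : Pairwise (Disjoint on Y))
    (hmrc : IsMaxRowClassifier X Y f) (j : Fin k) :
    (low X (Y j)).card + (univ.filter (fun t => t ≠ j)).sup (fun t => conf X Y f j t) ≤
      conf X Y f j j := by
  have hsup : (univ.filter (fun t => t ≠ j)).sup (fun t => conf X Y f j t) ≤
      conf X Y f j j - (low X (Y j)).card :=
    Finset.sup_le fun t ht =>
      le_tsub_of_add_le_left (card_low_add_conf_le hY hmrc (mem_filter.mp ht).2)
  calc _ ≤ (low X (Y j)).card + (conf X Y f j j - (low X (Y j)).card) := by gcongr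
    _ = conf X Y f j j := add_tsub_cancel_of_le (card_low_le_conf_self hY hmrc j)

end MaximalRowClassifier

theorem stmt11_general (U : Type) [DecidableEq U]
    (m k : ℕ) (X : Fin m → Finset U) (Y : Fin k → Finset U)
    (f : Fin m → Fin k)
    (hYdis : ∀ i j : Fin k, i ≠ j → Disjoint (Y i) (Y j))
    (hmrc : ∀ s j, (X s ∩ Y j).card ≤ (X s ∩ Y (f s)).card)
    :
    ∀ j,
      (low X (Y j)).card ≤
        conf X Y f j j -
          (Finset.univ.filter (fun t => t ≠ j)).sup (fun t => conf X Y f j t) ∧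
      conf X Y f j j -
          (Finset.univ.filter (fun t => t ≠ j)).sup (fun t => conf X Y f j t) ≤
        conf X Y f j j - ind (∑ i ∈ Finset.univ.filter (fun i => i ≠ j), conf X Y f j i) := by
  intro j
  have hY : Pairwise (Disjoint on Y) := fun i j hij => hYdis i j hij
  exact ⟨le_tsub_of_add_le_right (card_low_add_sup_conf_le hY hmrc j),
    tsub_le_tsub_left (ind_sum_le_sup _ _) _⟩

theorem stmt11 (U : Type) [Fintype U] [DecidableEq U] [Nonempty U]
    (m k : ℕ) (X : Fin m → Finset U) (Y : Fin k → Finset U)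
    (f : Fin m → Fin k)
    (hXdis : ∀ s t : Fin m, s ≠ t → Disjoint (X s) (X t))
    (hXcov : ∀ u : U, ∃ s, u ∈ X s)
    (hXne : ∀ s, (X s).Nonempty)
    (hYdis : ∀ i j : Fin k, i ≠ j → Disjoint (Y i) (Y j))
    (hYcov : ∀ u : U, ∃ i, u ∈ Y i)
    (hk : 1 < k)
    (hmrc : ∀ s j, (X s ∩ Y j).card ≤ (X s ∩ Y (f s)).card)
    :
    ∀ j,
      (low X (Y j)).card ≤
        conf X Y f j j -
          (Finset.univ.filter (fun t => t ≠ j)).sup (fun t => conf X Y f j t) ∧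
      conf X Y f j j -
          (Finset.univ.filter (fun t => t ≠ j)).sup (fun t => conf X Y f j t) ≤
        conf X Y f j j - ind (∑ i ∈ Finset.univ.filter (fun i => i ≠ j), conf X Y f j i) :=
  stmt11_general U m k X Y f hYdis hmrc
end
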